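/- Per-edge form of Theorem 1.9(3). Let p_i, p_j be unit vectors in ℝ³, f_i, f_j ∈ ℝ, and ξ_i, ξ_j ∈ ℝ³ with ⟨ξ_i, p_i⟩ = 0 and ⟨ξ_j, p_j⟩ = 0. Set q_i := f_i·p_i + ξ_i and q_j := f_j·p_j + ξ_j. Then ⟨q_j − q_i, p_j − p_i⟩ = 0 if and only if ⟨ξ_j − ξ_i, p_j − p_i⟩ = −((f_i + f_j)/2)·‖p_j − p_i‖². (The tangential component of an infinitesimal isometric deformation of a polyhedron inscribed in the unit sphere is a discrete conformal vector field with conformal factor equal to minus the radial component.) -/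
import Mathlib


noncomputable section

/-- Standard inner product on `ℝ³`. -/
def dot3 (x y : Fin 3 → ℝ) : ℝ := x 0 * y 0 + x 1 * y 1 + x 2 * y 2

/-- Euclidean norm on `ℝ³`. -/
def norm3 (x : Fin 3 → ℝ) : ℝ := Real.sqrt (dot3 x x)

lemma norm3_sq (x : Fin 3 → ℝ) : norm3 x ^ 2 = dot3 x x := by
  unfold norm3
  rw [Real.sq_sqrt]
  unfold dot3
  nlinarith [sq_nonneg (x 0), sq_nonneg (x 1), sq_nonneg (x 2)]

/-- Per-edge form of Theorem 1.9(3): for vertices on the unit sphere, `q = f·p + ξ`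
(with `ξ ⊥ p`) is an infinitesimal isometric deformation of the edge `p_i p_j` iff
the tangential component `ξ` is discretely conformal with conformal factors `−f`. -/
theorem sph_tangential_conformal
    (pi pj : Fin 3 → ℝ) (hpi : norm3 pi = 1) (hpj : norm3 pj = 1)
    (fi fj : ℝ) (ξi ξj : Fin 3 → ℝ)
    (hξi : dot3 ξi pi = 0) (hξj : dot3 ξj pj = 0) :
    dot3 ((fj • pj + ξj) - (fi • pi + ξi)) (pj - pi) = 0 ↔
      dot3 (ξj - ξi) (pj - pi) = -((fi + fj) / 2) * norm3 (pj - pi) ^ 2 := by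
  have hi : dot3 pi pi = 1 := by
    have := norm3_sq pi; rw [hpi] at this; linarith
  have hj : dot3 pj pj = 1 := by
    have := norm3_sq pj; rw [hpj] at this; linarith
  rw [norm3_sq]
  simp only [dot3, Pi.add_apply, Pi.sub_apply, Pi.smul_apply, smul_eq_mul] at *
  constructor <;> intro h
  · linear_combination h + (fi - fj)/2 * hj - (fi - fj)/2 * hi
  · linear_combination h - (fi - fj)/2 * hj + (fi - fj)/2 * hi
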